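/- arXiv:1505.06216 — 6 statements merged into one kernel-verified Lean document; each statement's English description precedes it below -/
import Mathlib

section
/- Let R, R̄ > 0 and let P be a probability distribution on Y = {R, −R̄} with P(y) > 0 for both outcomes, and let f be a real betting fraction with 1 + f·y > 0 for both y ∈ Y. Then Σ_{y∈Y} P(y)·ln(1 + f·y) ≤ D_KL(P‖Q), where D_KL(P‖Q) = Σ_{y∈Y} P(y)·ln(P(y)/Q(y)). -/
/-!
Against the fair odds `Q`, every bet `f` has expected relative capital
`∑ Q(y) (1 + f y) = 1`. Splitting `ln(1 + f y) = ln(P/Q) + ln(Q (1 + f y) / P)` and applying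
`P ln(w / P) ≤ w - P` (from `ln x ≤ x - 1`) to the second term bounds the growth rate by
`D_KL(P‖Q) + ∑ Q (1 + f y) - ∑ P = D_KL(P‖Q)`.
-/

/-- Outcome value map for binary gambling: `true ↦ R` (win), `false ↦ -R̄` (loss). -/
noncomputable def val (R Rbar : ℝ) (b : Bool) : ℝ := if b then R else -Rbar

/-- The reference distribution `Q` on the two outcomes:
`Q(R) = R̄/(R+R̄)`, `Q(-R̄) = R/(R+R̄)`. -/
noncomputable def Qb (R Rbar : ℝ) (b : Bool) : ℝ :=
  if b then Rbar / (R + Rbar) else R / (R + Rbar)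

open Real

lemma mul_log_div_le_sub {p w : ℝ} (hp : 0 ≤ p) (hw : 0 < w) : p * log (w / p) ≤ w - p := by
  rcases hp.eq_or_lt with rfl | hp
  · simpa using hw.le
  · calc p * log (w / p) ≤ p * (w / p - 1) :=
          mul_le_mul_of_nonneg_left (log_le_sub_one_of_pos (div_pos hw hp)) hp.le
      _ = w - p := by field_simp

lemma sum_mul_log_div_le_sub {ι : Type*} (s : Finset ι) {p w : ι → ℝ}
    (hp : ∀ i ∈ s, 0 ≤ p i) (hw : ∀ i ∈ s, 0 < w i) :
    ∑ i ∈ s, p i * log (w i / p i) ≤ ∑ i ∈ s, w i - ∑ i ∈ s, p i := by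
  rw [← Finset.sum_sub_distrib]
  exact Finset.sum_le_sum fun i hi => mul_log_div_le_sub (hp i hi) (hw i hi)

lemma log_eq_log_div_add_log_mul_div {p q x : ℝ} (hp : 0 < p) (hq : 0 < q) (hx : 0 < x) :
    log x = log (p / q) + log (q * x / p) := by
  rw [← log_mul (by positivity) (by positivity)]
  congr 1
  field_simp

lemma Qb_pos {R Rbar : ℝ} (hR : 0 < R) (hRbar : 0 < Rbar) (b : Bool) : 0 < Qb R Rbar b := by
  cases b <;> simp only [Qb, Bool.false_eq_true, if_true, if_false] <;> positivity

lemma sum_Qb_mul_one_add_mul_val {R Rbar : ℝ} (h : R + Rbar ≠ 0) (f : ℝ) :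
    ∑ b, Qb R Rbar b * (1 + f * val R Rbar b) = 1 := by
  simp only [Fintype.sum_bool, Qb, val, Bool.false_eq_true, if_true, if_false]
  field_simp
  ring

/-- The average capital growth rate in simple binary gambling is bounded by
the Kullback–Leibler divergence `D_KL(P‖Q)`. -/
theorem stmt1 (R Rbar : ℝ) (hR : 0 < R) (hRbar : 0 < Rbar)
    (P : Bool → ℝ) (hP : ∀ b, 0 < P b) (hPsum : ∑ b, P b = 1)
    (f : ℝ) (hf : ∀ b, 0 < 1 + f * val R Rbar b) :
    ∑ b, P b * Real.log (1 + f * val R Rbar b)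
      ≤ ∑ b, P b * Real.log (P b / Qb R Rbar b) := by
  set Q := Qb R Rbar
  set g := fun b => 1 + f * val R Rbar b
  have hQ := Qb_pos hR hRbar
  calc ∑ b, P b * log (g b)
      = ∑ b, P b * log (P b / Q b) + ∑ b, P b * log (Q b * g b / P b) := by
        rw [← Finset.sum_add_distrib]
        refine Finset.sum_congr rfl fun b _ => ?_
        rw [log_eq_log_div_add_log_mul_div (hP b) (hQ b) (hf b), mul_add]
    _ ≤ ∑ b, P b * log (P b / Q b) + (∑ b, Q b * g b - ∑ b, P b) := by
        gcongr
        exact sum_mul_log_div_le_sub _ (fun b _ => (hP b).le)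
          (fun b _ => mul_pos (hQ b) (hf b))
    _ = ∑ b, P b * log (P b / Q b) := by
        rw [sum_Qb_mul_one_add_mul_val (by positivity) f, hPsum, sub_self, add_zero]
end

section
/- Let P be a probability distribution on Y = {1, −1} with P(y) > 0 for both outcomes, and let f ∈ (−1, 1) be a betting fraction. Then Σ_{y∈Y} P(y)·ln(1 + f·y) ≤ ln 2 − S(Y), where S(Y) = −Σ_{y∈Y} P(y)·ln P(y) is the Shannon entropy of the outcome. -/
/-! The betting odds `Q y = (1 + f y) / 2` form a probability distribution on `{1, -1}`, and
`Σ P log (1 + f y) = ln 2 + Σ P log Q`. Gibbs' inequality `Σ P log Q ≤ Σ P log P` then gives the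
bound. -/

open Finset Real

-- `log x ≤ x - 1` at `x = q / p`
lemma mul_log_sub_mul_log_le {p q : ℝ} (hp : 0 ≤ p) (hq : 0 < q) :
    p * log q - p * log p ≤ q - p := by
  rcases hp.eq_or_lt with rfl | hp
  · simpa using hq.le
  have h := log_le_sub_one_of_pos (div_pos hq hp)
  rw [log_div hq.ne' hp.ne'] at h
  calc p * log q - p * log p = p * (log q - log p) := by ring
    _ ≤ p * (q / p - 1) := mul_le_mul_of_nonneg_left h hp.le
    _ = q - p := by field_simp

theorem sum_mul_log_le_sum_mul_log {ι : Type*} (s : Finset ι) {p q : ι → ℝ}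
    (hp : ∀ i ∈ s, 0 ≤ p i) (hq : ∀ i ∈ s, 0 < q i) (hmass : ∑ i ∈ s, q i ≤ ∑ i ∈ s, p i) :
    ∑ i ∈ s, p i * log (q i) ≤ ∑ i ∈ s, p i * log (p i) := by
  have h : ∑ i ∈ s, (p i * log (q i) - p i * log (p i)) ≤ ∑ i ∈ s, (q i - p i) :=
    sum_le_sum fun i hi => mul_log_sub_mul_log_le (hp i hi) (hq i hi)
  rw [sum_sub_distrib, sum_sub_distrib] at h
  linarith

/-- In even-money binary gambling (`y ∈ {1, -1}`), the average capital growth rate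
is bounded by `ln 2 - S(Y)`, where `S(Y)` is the Shannon entropy of the outcome. -/
theorem stmt2 (P : Bool → ℝ) (hP : ∀ b, 0 < P b) (hPsum : ∑ b, P b = 1)
    (f : ℝ) (hf : f ∈ Set.Ioo (-1 : ℝ) 1) :
    ∑ b, P b * Real.log (1 + f * (if b then (1 : ℝ) else -1))
      ≤ Real.log 2 - (-∑ b, P b * Real.log (P b)) := by
  obtain ⟨hf₁, hf₂⟩ := hf
  set Q : Bool → ℝ := fun b => (1 + f * (if b then (1 : ℝ) else -1)) / 2 with hQ
  have hQpos : ∀ b, 0 < Q b := by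
    intro b; cases b <;> simp only [hQ, Bool.false_eq_true, if_true, if_false] <;> linarith
  have hQsum : ∑ b, Q b = 1 := by simp only [hQ, Fintype.sum_bool]; norm_num; ring
  have hsplit : ∀ b, P b * log (1 + f * (if b then (1 : ℝ) else -1)) =
      P b * log 2 + P b * log (Q b) := by
    intro b
    rw [show 1 + f * (if b then (1 : ℝ) else -1) = 2 * Q b by simp only [hQ]; ring,
      log_mul two_ne_zero (hQpos b).ne', mul_add]
  have hgibbs := sum_mul_log_le_sum_mul_log univ (fun b _ => (hP b).le) (fun b _ => hQpos b)
    (hQsum.trans hPsum.symm).le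
  simp only [hsplit, sum_add_distrib, ← sum_mul, hPsum, one_mul]
  linarith
end

section
/- Let R, R̄ > 0, let X be a finite set of side-information signals, and let P(x, y) be a joint probability distribution on X × Y with Y = {R, −R̄}, such that all marginals P(x), P(y) and all values P(x, y) are strictly positive. Let f : X → ℝ be a betting strategy with 1 + f(x)·y > 0 for all x ∈ X, y ∈ Y. Then the expectation over (x, y) ∼ P of exp[ln(1 + f(x)·y) − ln P(y) − i_{xy} + ln Q(y)] equals 1, where i_{xy} = ln(P(x, y)/(P(x)·P(y))). -/
open Real

lemma mul_exp_log_sub_log_sub_log_div_add_log {p px py g q : ℝ}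
    (hp : 0 < p) (hpx : 0 < px) (hpy : 0 < py) (hg : 0 < g) (hq : 0 < q) :
    p * exp (log g - log py - log (p / (px * py)) + log q) = px * (g * q) := by
  rw [exp_add, exp_sub, exp_sub, exp_log hg, exp_log hpy, exp_log hq,
    exp_log (div_pos hp (mul_pos hpx hpy))]
  field_simp

lemma sum_joint_mul_exp_log_eq_sum_marginal_mul {X Y : Type*} [Fintype X] [Fintype Y]
    [Nonempty X] [Nonempty Y] (P : X → Y → ℝ) (hP : ∀ x y, 0 < P x y)
    (g : X → Y → ℝ) (hg : ∀ x y, 0 < g x y) (Q : Y → ℝ) (hQ : ∀ y, 0 < Q y) :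
    ∑ x, ∑ y, P x y * exp (log (g x y) - log (∑ x', P x' y)
        - log (P x y / ((∑ y', P x y') * (∑ x', P x' y))) + log (Q y))
      = ∑ x, (∑ y, P x y) * ∑ y, g x y * Q y := by
  have hPx : ∀ x, 0 < ∑ y, P x y := fun x =>
    Finset.sum_pos (fun y _ => hP x y) Finset.univ_nonempty
  have hPy : ∀ y, 0 < ∑ x, P x y := fun y =>
    Finset.sum_pos (fun x _ => hP x y) Finset.univ_nonempty
  refine Finset.sum_congr rfl fun x _ => ?_
  rw [Finset.mul_sum]
  exact Finset.sum_congr rfl fun y _ =>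
    mul_exp_log_sub_log_sub_log_div_add_log (hP x y) (hPx x) (hPy y) (hg x y) (hQ y)

lemma sum_one_add_mul_val_mul_Qb {R Rbar : ℝ} (hRR : R + Rbar ≠ 0) (c : ℝ) :
    ∑ b, (1 + c * val R Rbar b) * Qb R Rbar b = 1 := by
  simp only [Fintype.sum_bool, val, Qb, if_true, Bool.false_eq_true, if_false]
  field_simp
  ring

/-- Generalized Jarzynski-type equality for binary gambling with side information:
`⟨exp[g(f_x) + s_y - i_{xy} - s^Q_y]⟩_{x,y} = 1`, where `i_{xy}` is the pointwise
mutual information `ln(P(x,y)/(P(x)P(y)))`. -/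
theorem stmt5 {X : Type*} [Fintype X]
    (R Rbar : ℝ) (hR : 0 < R) (hRbar : 0 < Rbar)
    (P : X → Bool → ℝ) (hP : ∀ x b, 0 < P x b) (hPsum : ∑ x, ∑ b, P x b = 1)
    (f : X → ℝ) (hf : ∀ x b, 0 < 1 + f x * val R Rbar b) :
    ∑ x, ∑ b, P x b * Real.exp (Real.log (1 + f x * val R Rbar b)
        - Real.log (∑ x', P x' b)
        - Real.log (P x b / ((∑ b', P x b') * (∑ x', P x' b)))
        + Real.log (Qb R Rbar b)) = 1 := by
  have : Nonempty X := by
    by_contra hX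
    simp [not_nonempty_iff.mp hX] at hPsum
  rw [sum_joint_mul_exp_log_eq_sum_marginal_mul P hP _ hf _ (Qb_pos hR hRbar)]
  simp only [sum_one_add_mul_val_mul_Qb (add_pos hR hRbar).ne', mul_one, hPsum]
end

section
/- Let X be a finite set and P(x, y) a joint probability distribution on X × {1, −1} with all values P(x, y) strictly positive. Define the Kelly strategy f*(x) = P(y=1|x) − P(y=−1|x), so that 1 + f*(x)·y = 2·P(y|x). Then Σ_{x,y} P(x,y)·ln(1 + f*(x)·y) = ln 2 − S(Y) + I(X:Y), and for any strategy f : X → (−1, 1), Σ_{x,y} P(x,y)·ln(1 + f(x)·y) ≤ ln 2 − S(Y) + I(X:Y). Here S(Y) = −Σ_y P(y) ln P(y) and I(X:Y) = Σ_{x,y} P(x,y) ln(P(x,y)/(P(x)P(y))). -/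
/-!
The Kelly bet turns the per-signal wealth factor `1 + f*(x) y` into `2 P(y|x)`, so its growth
rate is `ln 2 - S(Y|X) = ln 2 - S(Y) + I(X:Y)`. Any other bet `f(x) ∈ (-1, 1)` gives the
factor `2 q(y)` for the probability vector `q(y) = (1 + f(x) y) / 2`, and Gibbs' inequality
`∑ P(y|x) ln q(y) ≤ ∑ P(y|x) ln P(y|x)` shows that it does no better.
-/

open Real Finset

theorem sum_mul_log_le_sum_mul_log_div_sum {ι : Type*} [Fintype ι] (p q : ι → ℝ)
    (hp : ∀ i, 0 < p i) (hq : ∀ i, 0 < q i) (hq_sum : ∑ i, q i = 1) :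
    ∑ i, p i * log (q i) ≤ ∑ i, p i * log (p i / ∑ j, p j) := by
  set S := ∑ j, p j
  have hS : 0 < S := by
    obtain ⟨i, hi, -⟩ := Finset.exists_ne_zero_of_sum_ne_zero (hq_sum ▸ one_ne_zero)
    exact Finset.sum_pos (fun j _ => hp j) ⟨i, hi⟩
  have hterm : ∀ i, p i * log (q i) - p i * log (p i / S) ≤ S * q i - p i := by
    intro i
    have hpi := hp i
    have hqi := hq i
    calc p i * log (q i) - p i * log (p i / S) = p i * log (S * q i / p i) := by
          rw [log_div (by positivity) hpi.ne', log_mul hS.ne' hqi.ne',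
            log_div hpi.ne' hS.ne']
          ring
      _ ≤ p i * (S * q i / p i - 1) :=
          mul_le_mul_of_nonneg_left (log_le_sub_one_of_pos (by positivity)) hpi.le
      _ = S * q i - p i := by field_simp
  have hsum := Finset.sum_le_sum fun i (_ : i ∈ univ) => hterm i
  rw [Finset.sum_sub_distrib, Finset.sum_sub_distrib, ← Finset.mul_sum, hq_sum] at hsum
  linarith

theorem one_add_div_sum_mul_sign (p : Bool → ℝ) (hp : ∑ b, p b ≠ 0) (b : Bool) :
    1 + (p true - p false) / (∑ b', p b') * (if b then (1 : ℝ) else -1)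
      = 2 * p b / ∑ b', p b' := by
  rw [Fintype.sum_bool] at hp ⊢
  cases b <;> simp only [if_true, Bool.false_eq_true, if_false] <;> field_simp <;> ring

theorem sum_mul_log_one_add_mul_sign_le (p : Bool → ℝ) (hp : ∀ b, 0 < p b) {f : ℝ}
    (hf : f ∈ Set.Ioo (-1 : ℝ) 1) :
    ∑ b, p b * log (1 + f * (if b then (1 : ℝ) else -1))
      ≤ ∑ b, p b * log (2 * p b / ∑ b', p b') := by
  obtain ⟨hf_gt, hf_lt⟩ := hf
  set q : Bool → ℝ := fun b => (1 + f * (if b then (1 : ℝ) else -1)) / 2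
  have hq : ∀ b, 0 < q b := by
    intro b
    cases b <;> simp only [q, if_true, Bool.false_eq_true, if_false] <;> linarith
  have hq_sum : ∑ b, q b = 1 := by
    simp only [q, Fintype.sum_bool, if_true, Bool.false_eq_true, if_false]
    ring
  have hS : 0 < ∑ b', p b' := Finset.sum_pos (fun b _ => hp b) univ_nonempty
  have hlhs : ∀ b, p b * log (1 + f * (if b then (1 : ℝ) else -1))
      = p b * log 2 + p b * log (q b) := by
    intro b
    rw [← mul_add, ← log_mul two_ne_zero (hq b).ne']
    simp only [q]
    ring_nf
  have hrhs : ∀ b, p b * log (2 * p b / ∑ b', p b')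
      = p b * log 2 + p b * log (p b / ∑ b', p b') := by
    intro b
    rw [← mul_add, ← log_mul two_ne_zero (div_pos (hp b) hS).ne', mul_div_assoc]
  simp only [hlhs, hrhs, Finset.sum_add_distrib]
  exact (add_le_add_iff_left _).2 (sum_mul_log_le_sum_mul_log_div_sum p q hp hq hq_sum)

theorem sum_mul_log_div_mul_marginals {X Y : Type*} [Fintype X] [Fintype Y]
    (P : X → Y → ℝ) (hP : ∀ x y, 0 < P x y) :
    ∑ x, ∑ y, P x y * log (P x y / ((∑ y', P x y') * (∑ x', P x' y)))
      = ∑ x, ∑ y, P x y * log (P x y / ∑ y', P x y')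
        - ∑ y, (∑ x, P x y) * log (∑ x, P x y) := by
  have hsplit : ∀ x y, P x y * log (P x y / ((∑ y', P x y') * (∑ x', P x' y)))
      = P x y * log (P x y / ∑ y', P x y') - P x y * log (∑ x', P x' y) := by
    intro x y
    have hrow : 0 < ∑ y', P x y' := Finset.sum_pos (fun y' _ => hP x y') ⟨y, mem_univ y⟩
    have hcol : 0 < ∑ x', P x' y := Finset.sum_pos (fun x' _ => hP x' y) ⟨x, mem_univ x⟩
    rw [← div_div, log_div (div_pos (hP x y) hrow).ne' hcol.ne', mul_sub]
  simp only [hsplit, Finset.sum_sub_distrib]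
  rw [Finset.sum_comm (f := fun x y => P x y * log (∑ x', P x' y))]
  simp only [Finset.sum_mul]

theorem log_sub_neg_entropy_add_mutualInfo {X Y : Type*} [Fintype X] [Fintype Y]
    (P : X → Y → ℝ) (hP : ∀ x y, 0 < P x y) (hP_sum : ∑ x, ∑ y, P x y = 1)
    {c : ℝ} (hc : 0 < c) :
    log c - (-∑ y, (∑ x, P x y) * log (∑ x, P x y))
        + ∑ x, ∑ y, P x y * log (P x y / ((∑ y', P x y') * (∑ x', P x' y)))
      = ∑ x, ∑ y, P x y * log (c * P x y / ∑ y', P x y') := by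
  have hsplit : ∀ x y, P x y * log (c * P x y / ∑ y', P x y')
      = P x y * log c + P x y * log (P x y / ∑ y', P x y') := by
    intro x y
    have hrow : 0 < ∑ y', P x y' := Finset.sum_pos (fun y' _ => hP x y') ⟨y, mem_univ y⟩
    rw [← mul_add, ← log_mul hc.ne' (div_pos (hP x y) hrow).ne', mul_div_assoc]
  have hlog_c : ∑ x, ∑ y, P x y * log c = log c := by
    simp only [← Finset.sum_mul, hP_sum, one_mul]
  rw [sum_mul_log_div_mul_marginals P hP]
  simp only [hsplit, Finset.sum_add_distrib, hlog_c]
  ring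

/-- In even-money binary gambling with side information, the Kelly strategy
`f*(x) = P(y=1|x) - P(y=-1|x)` attains the average capital growth rate
`ln 2 - S(Y) + I(X:Y)`, and any betting strategy `f : X → (-1,1)` has average
growth rate at most that value. -/
theorem stmt7 {X : Type*} [Fintype X]
    (P : X → Bool → ℝ) (hP : ∀ x b, 0 < P x b) (hPsum : ∑ x, ∑ b, P x b = 1) :
    (∑ x, ∑ b, P x b *
        Real.log (1 + ((P x true - P x false) / (∑ b', P x b')) *
          (if b then (1 : ℝ) else -1))
      = Real.log 2 - (-∑ b, (∑ x, P x b) * Real.log (∑ x, P x b))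
        + ∑ x, ∑ b, P x b * Real.log (P x b / ((∑ b', P x b') * (∑ x', P x' b))))
    ∧ ∀ f : X → ℝ, (∀ x, f x ∈ Set.Ioo (-1 : ℝ) 1) →
        ∑ x, ∑ b, P x b * Real.log (1 + f x * (if b then (1 : ℝ) else -1))
          ≤ Real.log 2 - (-∑ b, (∑ x, P x b) * Real.log (∑ x, P x b))
            + ∑ x, ∑ b, P x b * Real.log (P x b / ((∑ b', P x b') * (∑ x', P x' b))) := by
  refine ⟨?_, fun f hf => ?_⟩
  · rw [log_sub_neg_entropy_add_mutualInfo P hP hPsum two_pos]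
    refine Finset.sum_congr rfl fun x _ => Finset.sum_congr rfl fun b _ => ?_
    have hrow : ∑ b', P x b' ≠ 0 := (Finset.sum_pos (fun b' _ => hP x b') univ_nonempty).ne'
    rw [one_add_div_sum_mul_sign (P x) hrow]
  · rw [log_sub_neg_entropy_add_mutualInfo P hP hPsum two_pos]
    exact Finset.sum_le_sum fun x _ => sum_mul_log_one_add_mul_sign_le (P x) (hP x) (hf x)
end

section
/- Let X be a finite set and P(x, y) a joint probability distribution on X × {1, −1} with all values P(x, y) strictly positive. If the gambler bets the Kelly fractions f*(x) = P(y=1|x) − P(y=−1|x), then the efficacy γ* = ⟨exp[ln(1 + f*(x)·y) − ln P(y) + ln Q(y)]⟩_{(x,y)∼P} satisfies γ* = ⟨exp[i_{xy}]⟩ = Σ_{x,y} P(x|y)·P(y|x), where i_{xy} = ln(P(x,y)/(P(x)P(y))), P(x|y) = P(x,y)/P(y), P(y|x) = P(x,y)/P(x), and Q(1) = Q(−1) = 1/2. -/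
/-! The Kelly bet makes the payoff `1 + f*(x) y` equal to `2 P(y|x)`, so each efficacy factor
`(1 + f*(x) y) Q(y) / P(y)` is `P(x,y) / (P(x) P(y)) = exp i_{xy}`. -/

open Real Finset

lemma one_add_kellyFraction_mul_sign {p : Bool → ℝ} (hp : ∑ b, p b ≠ 0) (b : Bool) :
    1 + (p true - p false) / (∑ b, p b) * (if b then (1 : ℝ) else -1) = 2 * p b / ∑ b, p b := by
  rw [Fintype.sum_bool] at hp ⊢
  cases b <;> simp only [Bool.false_eq_true, if_true, if_false] <;> field_simp <;> ring

lemma exp_log_kellyGrowth_sub_log_add_log_half {p : Bool → ℝ} (hp : ∀ b, 0 < p b) {r : ℝ}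
    (hr : 0 < r) (b : Bool) :
    exp (log (1 + (p true - p false) / (∑ b, p b) * (if b then (1 : ℝ) else -1))
      - log r + log (1 / 2)) = p b / ((∑ b, p b) * r) := by
  have hs : 0 < ∑ b, p b := sum_pos (fun b _ => hp b) univ_nonempty
  rw [one_add_kellyFraction_mul_sign hs.ne', exp_add, exp_sub,
    exp_log (div_pos (mul_pos two_pos (hp b)) hs), exp_log hr, exp_log one_half_pos]
  field_simp

theorem stmt8_general {X : Type*} [Fintype X]
    (P : X → Bool → ℝ) (hP : ∀ x b, 0 < P x b) :
    let Px : X → ℝ := fun x => ∑ b, P x b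
    let Py : Bool → ℝ := fun b => ∑ x, P x b
    let fstar : X → ℝ := fun x => (P x true - P x false) / Px x
    let γ : ℝ := ∑ x, ∑ b, P x b *
      Real.exp (Real.log (1 + fstar x * (if b then (1 : ℝ) else -1))
        - Real.log (Py b) + Real.log (1 / 2))
    γ = (∑ x, ∑ b, P x b * Real.exp (Real.log (P x b / (Px x * Py b))))
    ∧ γ = ∑ x, ∑ b, (P x b / Py b) * (P x b / Px x) := by
  intro Px Py fstar γ
  have hPx : ∀ x, 0 < Px x := fun x => sum_pos (fun b _ => hP x b) univ_nonempty
  have hPy : ∀ x b, 0 < Py b := fun x b =>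
    (hP x b).trans_le (single_le_sum (fun x _ => (hP x b).le) (mem_univ x))
  have hγ : γ = ∑ x, ∑ b, P x b * (P x b / (Px x * Py b)) :=
    sum_congr rfl fun x _ => sum_congr rfl fun b _ =>
      congrArg (P x b * ·) (exp_log_kellyGrowth_sub_log_add_log_half (hP x) (hPy x b) b)
  refine ⟨hγ.trans ?_, hγ.trans ?_⟩ <;>
    refine sum_congr rfl fun x _ => sum_congr rfl fun b _ => ?_
  · rw [exp_log (div_pos (hP x b) (mul_pos (hPx x) (hPy x b)))]
  · ring

/-- Under the Kelly strategy `f*(x) = P(y=1|x) - P(y=-1|x)` in even-money binary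
gambling with side information, the efficacy
`γ* = ⟨exp[g + s_y - s^Q_y]⟩` equals `⟨exp[i_{xy}]⟩ = Σ_{x,y} P(x|y)·P(y|x)`. -/
theorem stmt8 {X : Type*} [Fintype X]
    (P : X → Bool → ℝ) (hP : ∀ x b, 0 < P x b) (hPsum : ∑ x, ∑ b, P x b = 1) :
    let Px : X → ℝ := fun x => ∑ b, P x b
    let Py : Bool → ℝ := fun b => ∑ x, P x b
    let fstar : X → ℝ := fun x => (P x true - P x false) / Px x
    let γ : ℝ := ∑ x, ∑ b, P x b *
      Real.exp (Real.log (1 + fstar x * (if b then (1 : ℝ) else -1))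
        - Real.log (Py b) + Real.log (1 / 2))
    γ = (∑ x, ∑ b, P x b * Real.exp (Real.log (P x b / (Px x * Py b))))
    ∧ γ = ∑ x, ∑ b, (P x b / Py b) * (P x b / Px x) :=
  stmt8_general P hP
end

section
/- Consider the Markovian coin tossing: y₀, y₁, …, y_n ∈ {1, −1} a Markov chain with uniform initial face and flip probability ε ∈ (0, 1). Suppose the gambler bets f₁ = 0 in the first game and the Kelly fractions f_i(y^{i−1}) determined by 1 + f_i·y_i = 2·P(y_i | y_{i−1}) for i ≥ 2 (i.e. f_i = (1 − 2ε)·y_{i−1}). Then the average capital growth rate equals ⟨g_n⟩ = ((n − 1)/n)·(ln 2 − S₂(ε)), which saturates the upper bound ln 2 − (1/n)·S(Y^n), where Y^n = (y₁,…,y_n). -/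
/-!
Under the Markov law the flips `y_i ≠ y_{i-1}` are independent with probability `ε`, so the
mean of any function `g` of one transition probability `P(y_i | y_{i-1})` is
`(1 - ε) g(1 - ε) + ε g(ε)`. The Kelly bet makes the log-return of game `i ≥ 2` equal to
`ln (2 P(y_i | y_{i-1}))`, of mean `ln 2 - S₂(ε)`, and that of game 1 zero. Summing out `y₀` turns
the law of `Y^n` into the law of a chain with `n - 1` transitions, and `ln P` is `-ln 2` plus the
transition log-probabilities, so `S(Y^n) = ln 2 + (n - 1) S₂(ε)`.
-/

open Real Finset

/-- `flipWeight ε x y = P(y_i = x | y_{i-1} = y)`. -/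
noncomputable def flipWeight (ε : ℝ) (x y : Bool) : ℝ := if x = y then 1 - ε else ε

noncomputable def chainWeight (ε : ℝ) (m : ℕ) (z : Fin (m + 1) → Bool) : ℝ :=
  (1 / 2) * ∏ i : Fin m, flipWeight ε (z i.succ) (z i.castSucc)

def spin (b : Bool) : ℝ := if b then 1 else -1

def kellyBet (ε : ℝ) {m : ℕ} (z : Fin (m + 1) → Bool) (i : Fin m) : ℝ :=
  if (i : ℕ) = 0 then 0 else (1 - 2 * ε) * spin (z i.castSucc)

lemma Fin.sum_pi_succ {α M : Type*} [Fintype α] [AddCommMonoid M] {m : ℕ}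
    (F : (Fin (m + 1) → α) → M) : ∑ z, F z = ∑ a, ∑ w : Fin m → α, F (Fin.cons a w) := by
  rw [← Fintype.sum_prod_type']
  exact (Fintype.sum_equiv (Fin.consEquiv fun _ => α) _ _ fun _ => rfl).symm

lemma binEntropy_eq_neg_mul_log (p : ℝ) :
    binEntropy p = -(p * log p) - (1 - p) * log (1 - p) := by
  simp only [binEntropy, log_inv]; ring

section

variable {ε : ℝ}

lemma sum_flipWeight (c : Bool) : ∑ b, flipWeight ε c b = 1 := by
  cases c <;> simp [flipWeight]

lemma sum_flipWeight_mul_comp (c : Bool) (g : ℝ → ℝ) :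
    ∑ b, flipWeight ε c b * g (flipWeight ε c b) = (1 - ε) * g (1 - ε) + ε * g ε := by
  cases c <;> simp [flipWeight, add_comm]

lemma flipWeight_pos (hε₀ : 0 < ε) (hε₁ : ε < 1) (x y : Bool) : 0 < flipWeight ε x y := by
  unfold flipWeight; split <;> linarith

lemma one_add_mul_spin_mul_spin (c x : Bool) :
    1 + (1 - 2 * ε) * spin c * spin x = 2 * flipWeight ε x c := by
  cases c <;> cases x <;> simp [spin, flipWeight] <;> ring

lemma chainWeight_cons (m : ℕ) (b : Bool) (w : Fin (m + 1) → Bool) :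
    chainWeight ε (m + 1) (Fin.cons b w) = flipWeight ε (w 0) b * chainWeight ε m w := by
  simp only [chainWeight, Fin.prod_univ_succ, ← Fin.succ_castSucc, Fin.cons_succ,
    Fin.castSucc_zero, Fin.cons_zero]
  ring

lemma sum_chainWeight_cons (m : ℕ) (w : Fin (m + 1) → Bool) :
    ∑ b, chainWeight ε (m + 1) (Fin.cons b w) = chainWeight ε m w := by
  simp only [chainWeight_cons, ← Finset.sum_mul, sum_flipWeight, one_mul]

lemma sum_chainWeight (m : ℕ) : ∑ z, chainWeight ε m z = 1 := by
  induction m with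
  | zero => simp [chainWeight]
  | succ m ih => rw [Fin.sum_pi_succ, Finset.sum_comm]; simp only [sum_chainWeight_cons, ih]

lemma sum_chainWeight_mul_comp_flipWeight {m : ℕ} (i : Fin m) (g : ℝ → ℝ) :
    ∑ z, chainWeight ε m z * g (flipWeight ε (z i.succ) (z i.castSucc))
      = (1 - ε) * g (1 - ε) + ε * g ε := by
  induction m with
  | zero => exact i.elim0
  | succ m ih =>
    rw [Fin.sum_pi_succ, Finset.sum_comm]
    cases i using Fin.cases with
    | zero =>
      simp only [Fin.cons_succ, Fin.castSucc_zero, Fin.cons_zero, chainWeight_cons,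
        mul_right_comm _ (chainWeight ε m _), ← Finset.sum_mul, sum_flipWeight_mul_comp,
        ← Finset.mul_sum, sum_chainWeight, mul_one]
    | succ j =>
      simp only [← Fin.succ_castSucc, Fin.cons_succ, chainWeight_cons, ← Finset.sum_mul,
        sum_flipWeight, one_mul]
      exact ih j

lemma sum_chainWeight_mul_log_flipWeight {m : ℕ} (i : Fin m) :
    ∑ z, chainWeight ε m z * log (flipWeight ε (z i.succ) (z i.castSucc)) = -binEntropy ε := by
  rw [sum_chainWeight_mul_comp_flipWeight, binEntropy_eq_neg_mul_log]
  ring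

lemma log_chainWeight (hε₀ : 0 < ε) (hε₁ : ε < 1) {m : ℕ} (z : Fin (m + 1) → Bool) :
    log (chainWeight ε m z)
      = -log 2 + ∑ i : Fin m, log (flipWeight ε (z i.succ) (z i.castSucc)) := by
  have hq (i : Fin m) := (flipWeight_pos hε₀ hε₁ (z i.succ) (z i.castSucc)).ne'
  rw [chainWeight, log_mul (by norm_num) (prod_ne_zero_iff.mpr fun i _ => hq i),
    log_prod fun i _ => hq i, one_div, log_inv]

lemma neg_sum_chainWeight_mul_log (hε₀ : 0 < ε) (hε₁ : ε < 1) (m : ℕ) :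
    -∑ z, chainWeight ε m z * log (chainWeight ε m z) = log 2 + m * binEntropy ε := by
  simp only [log_chainWeight hε₀ hε₁, mul_add, Finset.mul_sum, Finset.sum_add_distrib]
  rw [← Finset.sum_mul, sum_chainWeight, Finset.sum_comm]
  simp only [sum_chainWeight_mul_log_flipWeight, sum_const, card_univ, Fintype.card_fin,
    nsmul_eq_mul]
  ring

lemma sum_log_one_add_kellyBet_mul_spin {m : ℕ} (z : Fin (m + 2) → Bool) :
    ∑ i : Fin (m + 1), log (1 + kellyBet ε z i * spin (z i.succ))
      = ∑ j : Fin m, log (2 * flipWeight ε (z j.succ.succ) (z j.succ.castSucc)) := by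
  simp only [Fin.sum_univ_succ, kellyBet, Fin.val_zero, Fin.val_succ, if_true, zero_mul,
    add_zero, log_one, zero_add, Nat.succ_ne_zero, if_false, ← one_add_mul_spin_mul_spin]

lemma sum_chainWeight_mul_sum_log_kelly (hε₀ : 0 < ε) (hε₁ : ε < 1) (m : ℕ) :
    ∑ z, chainWeight ε (m + 1) z * ∑ i, log (1 + kellyBet ε z i * spin (z i.succ))
      = m * (log 2 - binEntropy ε) := by
  simp only [sum_log_one_add_kellyBet_mul_spin, Finset.mul_sum]
  rw [Finset.sum_comm]
  have hsite (j : Fin m) := sum_chainWeight_mul_comp_flipWeight (ε := ε) j.succ fun t => log (2 * t)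
  simp only [hsite, sum_const, card_univ, Fintype.card_fin, nsmul_eq_mul]
  rw [log_mul two_ne_zero (by linarith), log_mul two_ne_zero hε₀.ne', binEntropy_eq_neg_mul_log]
  ring

end

/-- In the Markovian coin tossing (uniform initial face `y₀`, flip probability `ε`),
the gambler who bets `f₁ = 0` in the first game and the Kelly fractions
`f_i = (1-2ε)·y_{i-1}` for `i ≥ 2` achieves the average capital growth rate
`((n-1)/n)·(ln 2 - S₂(ε))`, which saturates the upper bound `ln 2 - (1/n)·S(Y^n)`.
Here `z : Fin (n+1) → Bool` represents `(y₀,…,y_n)`, game `i : Fin n` has outcome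
`z i.succ` with previous outcome `z i.castSucc`. -/
theorem stmt14 (n : ℕ) (hn : 1 ≤ n) (ε : ℝ) (hε : ε ∈ Set.Ioo (0 : ℝ) 1) :
    (let val : Bool → ℝ := fun b => if b then 1 else -1;
    let Pfull : (Fin (n + 1) → Bool) → ℝ := fun z =>
      (1 / 2) * ∏ i : Fin n, (if z i.succ = z i.castSucc then 1 - ε else ε);
    let f : (Fin (n + 1) → Bool) → Fin n → ℝ := fun z i =>
      if (i : ℕ) = 0 then 0 else (1 - 2 * ε) * val (z i.castSucc);
    let avg : ℝ := ∑ z : Fin (n + 1) → Bool, Pfull z *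
      ((1 / (n : ℝ)) * ∑ i : Fin n, Real.log (1 + f z i * val (z i.succ)));
    let S₂ : ℝ := -(ε * Real.log ε) - (1 - ε) * Real.log (1 - ε);
    let Pmarg : (Fin n → Bool) → ℝ := fun w => ∑ b : Bool, Pfull (Fin.cons b w);
    avg = (((n : ℝ) - 1) / (n : ℝ)) * (Real.log 2 - S₂)
    ∧ avg = Real.log 2
        - (1 / (n : ℝ)) * (-(∑ w : Fin n → Bool, Pmarg w * Real.log (Pmarg w)))) := by
  obtain ⟨hε₀, hε₁⟩ := hε
  obtain ⟨m, rfl⟩ : ∃ m, n = m + 1 := ⟨n - 1, by omega⟩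
  intro val Pfull f avg S₂ Pmarg
  have havg : avg = 1 / (m + 1) * (m * (log 2 - binEntropy ε)) := by
    change ∑ z, chainWeight ε (m + 1) z *
      (1 / ((m + 1 : ℕ) : ℝ) * ∑ i, log (1 + kellyBet ε z i * spin (z i.succ))) = _
    rw [← sum_chainWeight_mul_sum_log_kelly hε₀ hε₁ m, Finset.mul_sum]
    push_cast
    exact Finset.sum_congr rfl fun z _ => mul_left_comm _ _ _
  have hS₂ : S₂ = binEntropy ε := (binEntropy_eq_neg_mul_log ε).symm
  have hPmarg : Pmarg = chainWeight ε m := funext (sum_chainWeight_cons m)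
  rw [hPmarg, neg_sum_chainWeight_mul_log hε₀ hε₁, havg, hS₂]
  push_cast
  constructor <;> field_simp <;> ring
end
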